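/- arXiv:2507.18600 — 4 statements merged into one kernel-verified Lean document; each statement's English description precedes it below -/
import Mathlib

section
/- Let X be a Haar system space, and let ℱ be the σ-algebra generated by a finite partition {A₁,…,Aₙ} of [0,1) where each A_i is a finite union of dyadic intervals. Then for every x in the span of the Haar system, ‖𝔼^ℱ x‖_X ≤ ‖x‖_X. -/
/-!
Refine to a dyadic level `M` so fine that `x` is constant on the dyadic intervals of length `2⁻ᴹ`
and every atom `A i` is a union of such intervals. Then `𝔼^ℱ x` replaces the values of `x` on the
intervals of each atom by their mean, which is the average of `x ∘ σ` over the permutations `σ`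
of the intervals that preserve every atom. Each `x ∘ σ` is equimeasurable with `x`, hence has the
same norm, and the triangle inequality bounds the norm of the average.
-/

open MeasureTheory

/-- The dyadic interval `[i / 2 ^ n, (i + 1) / 2 ^ n) ⊆ [0,1)`. -/
noncomputable def dyadicI (n i : ℕ) : Set ℝ :=
  Set.Ico ((i : ℝ) / 2 ^ n) ((i + 1 : ℝ) / 2 ^ n)

/-- The linear span `H` of the indicators of dyadic intervals (equivalently, of the
Haar system). -/
noncomputable def HaarSpan : Submodule ℝ (ℝ → ℝ) :=
  Submodule.span ℝ
    {f | ∃ n i : ℕ, i < 2 ^ n ∧ f = (dyadicI n i).indicator (fun _ => (1 : ℝ))}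

open Finset Filter Set

section Seminorm

variable {ι E : Type*} [AddCommGroup E] [Module ℝ E]

lemma Seminorm.apply_inv_card_smul_sum_le (p : Seminorm ℝ E) {s : Finset ι} (hs : s.Nonempty)
    (v : ι → E) {C : ℝ} (hv : ∀ i ∈ s, p (v i) ≤ C) : p ((#s : ℝ)⁻¹ • ∑ i ∈ s, v i) ≤ C := by
  have hcard : (0 : ℝ) < #s := by exact_mod_cast hs.card_pos
  calc p ((#s : ℝ)⁻¹ • ∑ i ∈ s, v i) = (#s : ℝ)⁻¹ * p (∑ i ∈ s, v i) := by
        rw [map_smul_eq_mul, norm_inv, Real.norm_natCast]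
    _ ≤ (#s : ℝ)⁻¹ * (#s * C) := by
        gcongr
        calc p (∑ i ∈ s, v i) ≤ ∑ i ∈ s, p (v i) :=
              Finset.le_sum_of_subadditive p (map_zero p).le (map_add_le_add p) s v
          _ ≤ #s • C := Finset.sum_le_card_nsmul s _ C hv
          _ = #s * C := nsmul_eq_mul _ _
    _ = C := by field_simp

end Seminorm

section BlockAverage

variable {α ι 𝕜 : Type*} [Fintype α] [DecidableEq α] [DecidableEq ι] [Field 𝕜] [CharZero 𝕜]

noncomputable def blockAverage (b : α → ι) (c : α → 𝕜) (j : α) : 𝕜 :=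
  (∑ k with b k = b j, c k) / #{k | b k = b j}

def blockPerms (b : α → ι) : Finset (Equiv.Perm α) :=
  {σ | ∀ k, b (σ k) = b k}

lemma one_mem_blockPerms (b : α → ι) : 1 ∈ blockPerms b := by
  simp [blockPerms]

lemma mul_swap_mem_blockPerms_iff {b : α → ι} {j j' : α} (h : b j = b j') (σ : Equiv.Perm α) :
    σ * Equiv.swap j j' ∈ blockPerms b ↔ σ ∈ blockPerms b := by
  have hswap : ∀ k, b (Equiv.swap j j' k) = b k := by
    intro k
    by_cases hj : k = j
    · simp [hj, h]
    by_cases hj' : k = j'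
    · simp [hj', h]
    rw [Equiv.swap_apply_of_ne_of_ne hj hj']
  simp only [blockPerms, Finset.mem_filter, Finset.mem_univ, true_and, Equiv.Perm.mul_apply]
  constructor
  · intro hσ k
    simpa only [Equiv.swap_apply_self, hswap] using hσ (Equiv.swap j j' k)
  · intro hσ k
    rw [hσ, hswap]

omit [CharZero 𝕜] in
lemma sum_blockPerms_apply_eq {b : α → ι} {j j' : α} (h : b j = b j') (c : α → 𝕜) :
    ∑ σ ∈ blockPerms b, c (σ j) = ∑ σ ∈ blockPerms b, c (σ j') :=
  Finset.sum_equiv (Equiv.mulRight (Equiv.swap j j'))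
    (fun σ => (mul_swap_mem_blockPerms_iff h σ).symm)
    (fun σ _ => by simp)

lemma blockAverage_eq_inv_card_smul_sum_comp (b : α → ι) (c : α → 𝕜) :
    blockAverage b c = (#(blockPerms b) : 𝕜)⁻¹ • ∑ σ ∈ blockPerms b, c ∘ σ := by
  funext j
  set B : Finset α := {k | b k = b j}
  have hB : (#B : 𝕜) ≠ 0 := by
    exact_mod_cast (Finset.card_pos.mpr ⟨j, by simp [B]⟩).ne'
  have hG : (#(blockPerms b) : 𝕜) ≠ 0 := by
    exact_mod_cast (Finset.card_pos.mpr ⟨1, one_mem_blockPerms b⟩).ne'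
  have hperm : ∀ σ ∈ blockPerms b, ∑ k ∈ B, c (σ k) = ∑ k ∈ B, c k := by
    intro σ hσ
    simp only [blockPerms, Finset.mem_filter, Finset.mem_univ, true_and] at hσ
    exact Finset.sum_equiv σ (by simp [B, hσ]) (fun _ _ => rfl)
  have hcount : #B * ∑ σ ∈ blockPerms b, c (σ j) = #(blockPerms b) * ∑ k ∈ B, c k := by
    calc #B * ∑ σ ∈ blockPerms b, c (σ j)
        = ∑ k ∈ B, ∑ σ ∈ blockPerms b, c (σ k) := by
          rw [Finset.sum_congr rfl fun k hk => sum_blockPerms_apply_eq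
            (Finset.mem_filter.mp hk).2 c, Finset.sum_const, nsmul_eq_mul]
      _ = ∑ σ ∈ blockPerms b, ∑ k ∈ B, c k := by
          rw [Finset.sum_comm]; exact Finset.sum_congr rfl hperm
      _ = #(blockPerms b) * ∑ k ∈ B, c k := by rw [Finset.sum_const, nsmul_eq_mul]
  simp only [Pi.smul_apply, Finset.sum_apply, Function.comp_apply, smul_eq_mul]
  change (∑ k ∈ B, c k) / #B = _
  field_simp
  linear_combination -hcount

end BlockAverage

section Dyadic

lemma mem_dyadicI {m j : ℕ} {t : ℝ} : t ∈ dyadicI m j ↔ 0 ≤ t ∧ ⌊t * 2 ^ m⌋₊ = j := by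
  have h2 : (0 : ℝ) < 2 ^ m := by positivity
  constructor
  · intro ht
    have h0 : 0 ≤ t := le_trans (by positivity) ht.1
    rw [dyadicI, Set.mem_Ico, div_le_iff₀ h2, lt_div_iff₀ h2] at ht
    exact ⟨h0, (Nat.floor_eq_iff (by positivity)).mpr ht⟩
  · rintro ⟨h0, h⟩
    rw [dyadicI, Set.mem_Ico, div_le_iff₀ h2, lt_div_iff₀ h2]
    exact (Nat.floor_eq_iff (by positivity)).mp h

lemma dyadicI_subset_Ico {m j : ℕ} (hj : j < 2 ^ m) : dyadicI m j ⊆ Ico (0 : ℝ) 1 := by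
  intro t ht
  have hj' : ((j : ℝ) + 1) / 2 ^ m ≤ 1 := by
    rw [div_le_one (by positivity)]; exact_mod_cast hj
  exact ⟨le_trans (by positivity) ht.1, ht.2.trans_le hj'⟩

lemma exists_mem_dyadicI {t : ℝ} (ht : t ∈ Ico (0 : ℝ) 1) (m : ℕ) :
    ∃ j : Fin (2 ^ m), t ∈ dyadicI m j := by
  have hlt : ⌊t * 2 ^ m⌋₊ < 2 ^ m := by
    rw [Nat.floor_lt (by have := ht.1; positivity)]
    push_cast
    nlinarith [ht.2, pow_pos (two_pos : (0 : ℝ) < 2) m]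
  exact ⟨⟨_, hlt⟩, mem_dyadicI.mpr ⟨ht.1, rfl⟩⟩

lemma pairwise_disjoint_dyadicI (m : ℕ) :
    Pairwise fun i j => Disjoint (dyadicI m i) (dyadicI m j) := by
  intro j j' hne
  refine Set.disjoint_left.mpr fun t ht ht' => hne ?_
  rw [← (mem_dyadicI.mp ht).2, (mem_dyadicI.mp ht').2]

lemma measurableSet_dyadicI (m j : ℕ) : MeasurableSet (dyadicI m j) := measurableSet_Ico

lemma volume_dyadicI (m j : ℕ) : volume (dyadicI m j) = ENNReal.ofReal (2 ^ m)⁻¹ := by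
  rw [dyadicI, Real.volume_Ico]
  congr 1
  field_simp
  ring

lemma dyadicI_subset_dyadicI_div {m M : ℕ} (h : m ≤ M) (j : ℕ) :
    dyadicI M j ⊆ dyadicI m (j / 2 ^ (M - m)) := by
  intro t ht
  obtain ⟨h0, rfl⟩ := mem_dyadicI.mp ht
  refine mem_dyadicI.mpr ⟨h0, ?_⟩
  rw [← Nat.floor_div_natCast]
  congr 1
  push_cast
  rw [eq_div_iff (by positivity), mul_assoc, ← pow_add, Nat.add_sub_cancel' h]

lemma dyadicI_subset_or_disjoint {m M : ℕ} (h : m ≤ M) (j i : ℕ) :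
    dyadicI M j ⊆ dyadicI m i ∨ Disjoint (dyadicI M j) (dyadicI m i) := by
  by_cases hi : j / 2 ^ (M - m) = i
  · exact .inl (hi ▸ dyadicI_subset_dyadicI_div h j)
  · exact .inr ((pairwise_disjoint_dyadicI m hi).mono_left (dyadicI_subset_dyadicI_div h j))

lemma eventually_dyadicI_subset_or_disjoint_biUnion (S : Finset (ℕ × ℕ)) :
    ∀ᶠ M in atTop, ∀ j, dyadicI M j ⊆ ⋃ p ∈ S, dyadicI p.1 p.2 ∨
      Disjoint (dyadicI M j) (⋃ p ∈ S, dyadicI p.1 p.2) := by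
  filter_upwards [eventually_ge_atTop (S.sup Prod.fst)] with M hM j
  by_cases h : ∃ p ∈ S, dyadicI M j ⊆ dyadicI p.1 p.2
  · obtain ⟨p, hp, hsub⟩ := h
    exact .inl (hsub.trans (Set.subset_biUnion_of_mem (u := fun p => dyadicI p.1 p.2) hp))
  · simp only [not_exists, not_and] at h
    refine .inr (Set.disjoint_iUnion₂_right.mpr fun p hp => ?_)
    exact (dyadicI_subset_or_disjoint ((Finset.le_sup hp).trans hM) j p.2).resolve_left (h p hp)

end Dyadic

section DyadicStep

noncomputable def dyadicStep (m : ℕ) : (Fin (2 ^ m) → ℝ) →ₗ[ℝ] ℝ → ℝ :=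
  Fintype.linearCombination ℝ fun j => (dyadicI m j).indicator fun _ => 1

lemma dyadicStep_mem_haarSpan (m : ℕ) (c : Fin (2 ^ m) → ℝ) : dyadicStep m c ∈ HaarSpan := by
  rw [dyadicStep, Fintype.linearCombination_apply]
  exact Submodule.sum_mem _ fun j _ =>
    Submodule.smul_mem _ _ (Submodule.subset_span ⟨m, j, j.isLt, rfl⟩)

lemma dyadicStep_apply_of_mem {m : ℕ} {j : Fin (2 ^ m)} {t : ℝ} (ht : t ∈ dyadicI m j)
    (c : Fin (2 ^ m) → ℝ) : dyadicStep m c t = c j := by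
  rw [dyadicStep, Fintype.linearCombination_apply, Finset.sum_apply,
    Finset.sum_eq_single j, Pi.smul_apply, indicator_of_mem ht, smul_eq_mul, mul_one]
  · intro k _ hkj
    have hk : t ∉ dyadicI m k :=
      Set.disjoint_right.mp (pairwise_disjoint_dyadicI m (Fin.val_ne_of_ne hkj)) ht
    rw [Pi.smul_apply, indicator_of_notMem hk, smul_zero]
  · simp

lemma dyadicStep_apply_of_notMem {m : ℕ} {t : ℝ} (ht : t ∉ Ico (0 : ℝ) 1)
    (c : Fin (2 ^ m) → ℝ) : dyadicStep m c t = 0 := by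
  rw [dyadicStep, Fintype.linearCombination_apply, Finset.sum_apply]
  refine Finset.sum_eq_zero fun j _ => ?_
  rw [Pi.smul_apply, indicator_of_notMem fun h => ht (dyadicI_subset_Ico j.isLt h), smul_zero]

def dyadicParent {m M : ℕ} (h : m ≤ M) (j : Fin (2 ^ M)) : Fin (2 ^ m) :=
  ⟨j / 2 ^ (M - m), Nat.div_lt_of_lt_mul <| by rw [← pow_add, Nat.sub_add_cancel h]; exact j.isLt⟩

lemma dyadicStep_eq_comp_dyadicParent {m M : ℕ} (h : m ≤ M) (c : Fin (2 ^ m) → ℝ) :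
    dyadicStep m c = dyadicStep M (c ∘ dyadicParent h) := by
  funext t
  by_cases ht : t ∈ Ico (0 : ℝ) 1
  · obtain ⟨j, htj⟩ := exists_mem_dyadicI ht M
    rw [dyadicStep_apply_of_mem htj, dyadicStep_apply_of_mem (j := dyadicParent h j)
      (dyadicI_subset_dyadicI_div h j htj), Function.comp_apply]
  · rw [dyadicStep_apply_of_notMem ht, dyadicStep_apply_of_notMem ht]

lemma eventually_exists_eq_dyadicStep {x : ℝ → ℝ} (hx : x ∈ HaarSpan) :
    ∀ᶠ M in atTop, ∃ c, x = dyadicStep M c := by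
  induction hx using Submodule.span_induction with
  | mem f hf =>
    obtain ⟨m, i, hi, rfl⟩ := hf
    filter_upwards [eventually_ge_atTop m] with M hM
    refine ⟨Pi.single ⟨i, hi⟩ 1 ∘ dyadicParent hM, ?_⟩
    rw [← dyadicStep_eq_comp_dyadicParent, dyadicStep, Fintype.linearCombination_apply_single,
      one_smul]
  | zero => exact .of_forall fun M => ⟨0, (map_zero _).symm⟩
  | add f g _ _ hf hg =>
    filter_upwards [hf, hg] with M ⟨c, hc⟩ ⟨c', hc'⟩
    exact ⟨c + c', by rw [map_add, hc, hc']⟩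
  | smul a f _ hf =>
    filter_upwards [hf] with M ⟨c, hc⟩
    exact ⟨a • c, by rw [map_smul, hc]⟩

lemma setOf_lt_abs_dyadicStep (m : ℕ) (c : Fin (2 ^ m) → ℝ) (a : ℝ) :
    {t ∈ Ico (0 : ℝ) 1 | a < |dyadicStep m c t|} = ⋃ j ∈ ({j | a < |c j|} : Finset _),
      dyadicI m j := by
  ext t
  simp only [mem_sep_iff, mem_iUnion, Finset.mem_filter, Finset.mem_univ, true_and,
    exists_prop]
  constructor
  · rintro ⟨ht, ha⟩
    obtain ⟨j, htj⟩ := exists_mem_dyadicI ht m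
    exact ⟨j, by rwa [dyadicStep_apply_of_mem htj] at ha, htj⟩
  · rintro ⟨j, ha, htj⟩
    exact ⟨dyadicI_subset_Ico j.isLt htj, by rwa [dyadicStep_apply_of_mem htj]⟩

lemma volume_setOf_lt_abs_dyadicStep (m : ℕ) (c : Fin (2 ^ m) → ℝ) (a : ℝ) :
    volume {t ∈ Ico (0 : ℝ) 1 | a < |dyadicStep m c t|} =
      #{j | a < |c j|} * ENNReal.ofReal (2 ^ m)⁻¹ := by
  rw [setOf_lt_abs_dyadicStep, measure_biUnion_finset
    (fun j _ k _ hjk => pairwise_disjoint_dyadicI m (Fin.val_ne_of_ne hjk))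
    (fun j _ => measurableSet_dyadicI m j)]
  simp only [volume_dyadicI, Finset.sum_const, nsmul_eq_mul]

lemma volume_setOf_lt_abs_dyadicStep_comp_perm (m : ℕ) (c : Fin (2 ^ m) → ℝ)
    (σ : Equiv.Perm (Fin (2 ^ m))) (a : ℝ) :
    volume {t ∈ Ico (0 : ℝ) 1 | a < |dyadicStep m (c ∘ σ) t|} =
      volume {t ∈ Ico (0 : ℝ) 1 | a < |dyadicStep m c t|} := by
  rw [volume_setOf_lt_abs_dyadicStep, volume_setOf_lt_abs_dyadicStep,
    Finset.card_equiv σ (t := {j | a < |c j|}) (by simp)]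

end DyadicStep

section PartitionAverage

variable {ι : Type*}

lemma exists_dyadicI_subset {M : ℕ} {A : ι → Set ℝ}
    (hcompat : ∀ i (j : Fin (2 ^ M)), dyadicI M j ⊆ A i ∨ Disjoint (dyadicI M j) (A i))
    (hcover : ⋃ i, A i = Ico (0 : ℝ) 1) (j : Fin (2 ^ M)) : ∃ i, dyadicI M j ⊆ A i := by
  have hleft : (j : ℝ) / 2 ^ M ∈ dyadicI M j :=
    mem_dyadicI.mpr ⟨by positivity, by
      rw [div_mul_cancel₀ _ (by positivity), Nat.floor_natCast]⟩
  obtain ⟨i, hi⟩ := mem_iUnion.mp (hcover ▸ dyadicI_subset_Ico j.isLt hleft)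
  exact ⟨i, (hcompat i j).resolve_right
    fun hdisj => Set.disjoint_left.mp hdisj hleft hi⟩

lemma exists_eq_biUnion_dyadicI [DecidableEq ι] {M : ℕ} {A : ι → Set ℝ}
    (hcompat : ∀ i (j : Fin (2 ^ M)), dyadicI M j ⊆ A i ∨ Disjoint (dyadicI M j) (A i))
    (hdisj : ∀ i j, i ≠ j → Disjoint (A i) (A j)) (hcover : ⋃ i, A i = Ico (0 : ℝ) 1) :
    ∃ b : Fin (2 ^ M) → ι, ∀ i, A i = ⋃ j ∈ ({j | b j = i} : Finset _), dyadicI M j := by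
  choose b hb using exists_dyadicI_subset hcompat hcover
  refine ⟨b, fun i => subset_antisymm (fun t ht => ?_) ?_⟩
  · have htI : t ∈ Ico (0 : ℝ) 1 := hcover ▸ mem_iUnion.mpr ⟨i, ht⟩
    obtain ⟨j, htj⟩ := exists_mem_dyadicI htI M
    have hbj : b j = i := by
      by_contra hne
      exact Set.disjoint_left.mp (hdisj _ _ hne) (hb j htj) ht
    exact mem_iUnion₂.mpr ⟨j, by simp [hbj], htj⟩
  · refine iUnion₂_subset fun j hj => ?_
    rw [Finset.mem_filter] at hj
    exact hj.2 ▸ hb j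

noncomputable def partitionAverage [Fintype ι] (A : ι → Set ℝ) (x : ℝ → ℝ) : ℝ → ℝ :=
  fun t => ∑ i, (A i).indicator (fun _ => (∫ s in A i, x s) / (volume (A i)).toReal) t

lemma partitionAverage_apply_of_mem [Fintype ι] {A : ι → Set ℝ}
    (hdisj : ∀ i j, i ≠ j → Disjoint (A i) (A j)) (x : ℝ → ℝ) {i : ι} {t : ℝ} (ht : t ∈ A i) :
    partitionAverage A x t = (∫ s in A i, x s) / (volume (A i)).toReal := by
  rw [partitionAverage, Finset.sum_eq_single i, indicator_of_mem ht]
  · exact fun k _ hki => indicator_of_notMem (Set.disjoint_right.mp (hdisj k i hki) ht) _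
  · simp

lemma partitionAverage_apply_of_forall_notMem [Fintype ι] {A : ι → Set ℝ} (x : ℝ → ℝ) {t : ℝ}
    (ht : ∀ i, t ∉ A i) : partitionAverage A x t = 0 :=
  Finset.sum_eq_zero fun i _ => indicator_of_notMem (ht i) _

lemma setIntegral_biUnion_dyadicI_dyadicStep {M : ℕ} (s : Finset (Fin (2 ^ M)))
    (c : Fin (2 ^ M) → ℝ) :
    ∫ t in ⋃ j ∈ s, dyadicI M j, dyadicStep M c t = (∑ j ∈ s, c j) / 2 ^ M := by
  have hconst : ∀ j : Fin (2 ^ M), EqOn (dyadicStep M c) (fun _ => c j) (dyadicI M j) :=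
    fun j _ ht => dyadicStep_apply_of_mem ht c
  rw [integral_biUnion_finset s (fun j _ => measurableSet_dyadicI M j)
    (fun j _ k _ hjk => pairwise_disjoint_dyadicI M (Fin.val_ne_of_ne hjk))
    (fun j _ => (integrableOn_const (by simp [volume_dyadicI])).congr_fun (hconst j).symm
      (measurableSet_dyadicI M j)), Finset.sum_div]
  refine Finset.sum_congr rfl fun j _ => ?_
  rw [setIntegral_congr_fun (measurableSet_dyadicI M j) (hconst j), setIntegral_const,
    measureReal_def, volume_dyadicI, ENNReal.toReal_ofReal (by positivity), smul_eq_mul]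
  field_simp

lemma toReal_volume_biUnion_dyadicI {M : ℕ} (s : Finset (Fin (2 ^ M))) :
    (volume (⋃ j ∈ s, dyadicI M j)).toReal = #s / 2 ^ M := by
  rw [measure_biUnion_finset
    (fun j _ k _ hjk => pairwise_disjoint_dyadicI M (Fin.val_ne_of_ne hjk))
    (fun j _ => measurableSet_dyadicI M j), div_eq_mul_inv]
  simp only [volume_dyadicI, Finset.sum_const, nsmul_eq_mul, ENNReal.toReal_mul,
    ENNReal.toReal_natCast, ENNReal.toReal_ofReal (by positivity : (0 : ℝ) ≤ (2 ^ M)⁻¹)]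

lemma partitionAverage_dyadicStep [Fintype ι] [DecidableEq ι] {M : ℕ} {A : ι → Set ℝ}
    {b : Fin (2 ^ M) → ι}
    (hdisj : ∀ i j, i ≠ j → Disjoint (A i) (A j))
    (hA : ∀ i, A i = ⋃ j ∈ ({j | b j = i} : Finset _), dyadicI M j) (c : Fin (2 ^ M) → ℝ) :
    partitionAverage A (dyadicStep M c) = dyadicStep M (blockAverage b c) := by
  funext t
  by_cases ht : t ∈ Ico (0 : ℝ) 1
  · obtain ⟨j, htj⟩ := exists_mem_dyadicI ht M
    have htA : t ∈ A (b j) := by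
      rw [hA]
      exact mem_iUnion₂.mpr ⟨j, by simp, htj⟩
    rw [partitionAverage_apply_of_mem hdisj _ htA, dyadicStep_apply_of_mem htj, hA,
      setIntegral_biUnion_dyadicI_dyadicStep, toReal_volume_biUnion_dyadicI, blockAverage,
      div_div_div_cancel_right₀ (by positivity)]
  · rw [dyadicStep_apply_of_notMem ht, partitionAverage_apply_of_forall_notMem]
    intro i hti
    rw [hA] at hti
    obtain ⟨j, -, htj⟩ := mem_iUnion₂.mp hti
    exact ht (dyadicI_subset_Ico j.isLt htj)

end PartitionAverage

theorem condexp_bounded_in_haar_system_space_general (N : (ℝ → ℝ) → ℝ)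
    (hadd : ∀ f g : ℝ → ℝ, N (f + g) ≤ N f + N g)
    (hsmul : ∀ (a : ℝ) (f : ℝ → ℝ), N (a • f) = |a| * N f)
    (hdist : ∀ f g : ℝ → ℝ, f ∈ HaarSpan → g ∈ HaarSpan →
      (∀ a : ℝ, volume {t ∈ Set.Ico (0 : ℝ) 1 | a < |f t|} =
        volume {t ∈ Set.Ico (0 : ℝ) 1 | a < |g t|}) → N f = N g)
    (n : ℕ) (A : Fin n → Set ℝ)
    (hdyadic : ∀ i, ∃ S : Finset (ℕ × ℕ), (∀ p ∈ S, p.2 < 2 ^ p.1) ∧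
      A i = ⋃ p ∈ S, dyadicI p.1 p.2)
    (hdisj : ∀ i j, i ≠ j → Disjoint (A i) (A j))
    (hcover : (⋃ i, A i) = Set.Ico (0 : ℝ) 1)
    (x : ℝ → ℝ) (hx : x ∈ HaarSpan) :
    N (fun t => ∑ i, (A i).indicator
        (fun _ => (∫ s in A i, x s) / (volume (A i)).toReal) t) ≤ N x := by
  have hcompat : ∀ i, ∀ᶠ M in atTop, ∀ j, dyadicI M j ⊆ A i ∨ Disjoint (dyadicI M j) (A i) :=
    fun i => by
      obtain ⟨S, -, hS⟩ := hdyadic i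
      exact hS ▸ eventually_dyadicI_subset_or_disjoint_biUnion S
  obtain ⟨M, ⟨c, rfl⟩, hM⟩ :=
    ((eventually_exists_eq_dyadicStep hx).and (eventually_all.mpr hcompat)).exists
  obtain ⟨b, hb⟩ := exists_eq_biUnion_dyadicI (fun i j => hM i j) hdisj hcover
  let p : Seminorm ℝ (ℝ → ℝ) := Seminorm.of N hadd hsmul
  change p (partitionAverage A (dyadicStep M c)) ≤ p (dyadicStep M c)
  rw [partitionAverage_dyadicStep hdisj hb, blockAverage_eq_inv_card_smul_sum_comp, map_smul,
    map_sum]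
  exact p.apply_inv_card_smul_sum_le ⟨1, one_mem_blockPerms b⟩ _ fun σ _ =>
    (hdist _ _ (dyadicStep_mem_haarSpan M _) (dyadicStep_mem_haarSpan M c)
      (volume_setOf_lt_abs_dyadicStep_comp_perm M c σ)).le

/-- Let `X` be a Haar system space (with rearrangement-invariant norm `N`, normalized so
that `N(χ_{[0,1)}) = 1`), and let `ℱ` be the σ-algebra generated by a finite partition
`{A₁, …, Aₙ}` of `[0,1)`, each `A i` a finite union of dyadic intervals.  Then for every
`x ∈ H`, the conditional expectation `𝔼^ℱ x` satisfies `N (𝔼^ℱ x) ≤ N x`. -/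
theorem condexp_bounded_in_haar_system_space (N : (ℝ → ℝ) → ℝ)
    (hadd : ∀ f g : ℝ → ℝ, N (f + g) ≤ N f + N g)
    (hsmul : ∀ (a : ℝ) (f : ℝ → ℝ), N (a • f) = |a| * N f)
    (hmono : ∀ f g : ℝ → ℝ, f ∈ HaarSpan → g ∈ HaarSpan →
      (∀ t, |f t| ≤ |g t|) → N f ≤ N g)
    (hdist : ∀ f g : ℝ → ℝ, f ∈ HaarSpan → g ∈ HaarSpan →
      (∀ a : ℝ, volume {t ∈ Set.Ico (0 : ℝ) 1 | a < |f t|} =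
        volume {t ∈ Set.Ico (0 : ℝ) 1 | a < |g t|}) → N f = N g)
    (hnorm : N ((Set.Ico (0 : ℝ) 1).indicator (fun _ => (1 : ℝ))) = 1)
    (n : ℕ) (A : Fin n → Set ℝ)
    (hdyadic : ∀ i, ∃ S : Finset (ℕ × ℕ), (∀ p ∈ S, p.2 < 2 ^ p.1) ∧
      A i = ⋃ p ∈ S, dyadicI p.1 p.2)
    (hdisj : ∀ i j, i ≠ j → Disjoint (A i) (A j))
    (hcover : (⋃ i, A i) = Set.Ico (0 : ℝ) 1)
    (x : ℝ → ℝ) (hx : x ∈ HaarSpan) :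
    N (fun t => ∑ i, (A i).indicator
        (fun _ => (∫ s in A i, x s) / (volume (A i)).toReal) t) ≤ N x :=
  condexp_bounded_in_haar_system_space_general N hadd hsmul hdist n A hdyadic hdisj hcover x hx
end

section
/- Invertibility trick for factorization: let X be a Banach space, T : X→X a bounded operator, 0 < η < 1/2, and c a scalar with c ≥ 1/2. Suppose there are bounded operators A, B : X→X with ‖A‖·‖B‖ ≤ 1 and ‖ATB − cI_X‖ ≤ η. Then there exist bounded operators L, R : X→X with LTR = I_X and ‖L‖·‖R‖ ≤ 2/(1 − 2η). -/
/-- Invertibility trick: if `‖A‖ ‖B‖ ≤ 1` and `‖ATB - c I‖ ≤ η` with `c ≥ 1/2` and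
`0 < η < 1/2`, then there exist `L, R` with `LTR = I` and `‖L‖ ‖R‖ ≤ 2 / (1 - 2η)`. -/
theorem invertibility_trick
    {X : Type*} [NormedAddCommGroup X] [NormedSpace ℝ X] [CompleteSpace X]
    (T A B : X →L[ℝ] X) (η c : ℝ)
    (hη0 : 0 < η) (hη : η < 1 / 2) (hc : 1 / 2 ≤ c)
    (hAB : ‖A‖ * ‖B‖ ≤ 1)
    (hfac : ‖A.comp (T.comp B) - c • ContinuousLinearMap.id ℝ X‖ ≤ η) :
    ∃ L R : X →L[ℝ] X,
      L.comp (T.comp R) = ContinuousLinearMap.id ℝ X ∧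
      ‖L‖ * ‖R‖ ≤ 2 / (1 - 2 * η) := by
  have hc0 : (0:ℝ) < c := lt_of_lt_of_le (by norm_num) hc
  set S : X →L[ℝ] X := c⁻¹ • (A.comp (T.comp B)) with hS
  have hid : (ContinuousLinearMap.id ℝ X : X →L[ℝ] X) = 1 := rfl
  have hkey : (1 : X →L[ℝ] X) - S
      = (-c⁻¹) • (A.comp (T.comp B) - c • ContinuousLinearMap.id ℝ X) := by
    rw [hS, hid, smul_sub, neg_smul, neg_smul, smul_smul, inv_mul_cancel₀ hc0.ne',
      one_smul, sub_neg_eq_add, neg_add_eq_sub]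
  have htle : ‖(1 : X →L[ℝ] X) - S‖ ≤ η / c := by
    have hns := norm_smul (α := ℝ) (-c⁻¹)
      (A.comp (T.comp B) - c • ContinuousLinearMap.id ℝ X)
    rw [hkey, hns, norm_neg, Real.norm_eq_abs, abs_inv, abs_of_pos hc0, div_eq_inv_mul]
    exact mul_le_mul_of_nonneg_left hfac (by positivity)
  have hηc : η / c < 1 := (div_lt_one hc0).mpr (lt_of_lt_of_le hη hc)
  have ht : ‖(1 : X →L[ℝ] X) - S‖ < 1 := lt_of_le_of_lt htle hηc
  set u : (X →L[ℝ] X)ˣ := Units.oneSub ((1 : X →L[ℝ] X) - S) ht with hu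
  have huval : (u : X →L[ℝ] X) = S := by simp [hu]
  -- inverse norm bound
  have hinv : ‖(↑u⁻¹ : X →L[ℝ] X)‖ ≤ (1 - ‖(1 : X →L[ℝ] X) - S‖)⁻¹ := by
    have h1 : (↑u⁻¹ : X →L[ℝ] X) = ∑' n : ℕ, ((1 : X →L[ℝ] X) - S) ^ n := rfl
    have h2 := tsum_geometric_le_of_norm_lt_one ((1 : X →L[ℝ] X) - S) ht
    have h3 : ‖(1 : X →L[ℝ] X)‖ ≤ 1 := ContinuousLinearMap.norm_id_le
    rw [h1]; linarith
  refine ⟨(↑u⁻¹ : X →L[ℝ] X).comp (c⁻¹ • A), B, ?_, ?_⟩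
  · have : ((c⁻¹ • A : X →L[ℝ] X)).comp (T.comp B) = S := by
      rw [hS]; ext x; simp
    rw [ContinuousLinearMap.comp_assoc, this, hid, ← huval]
    exact u.inv_mul
  · have h4 : ‖((↑u⁻¹ : X →L[ℝ] X)).comp (c⁻¹ • A)‖ * ‖B‖
        ≤ ‖(↑u⁻¹ : X →L[ℝ] X)‖ * (c⁻¹ * (‖A‖ * ‖B‖)) := by
      have := ContinuousLinearMap.opNorm_comp_le (↑u⁻¹ : X →L[ℝ] X) (c⁻¹ • A)
      have hnsmul : ‖(c⁻¹ • A : X →L[ℝ] X)‖ = c⁻¹ * ‖A‖ := by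
        rw [norm_smul (α := ℝ) c⁻¹ A, Real.norm_eq_abs, abs_inv, abs_of_pos hc0]
      calc ‖((↑u⁻¹ : X →L[ℝ] X)).comp (c⁻¹ • A)‖ * ‖B‖
          ≤ (‖(↑u⁻¹ : X →L[ℝ] X)‖ * (c⁻¹ * ‖A‖)) * ‖B‖ := by
            apply mul_le_mul_of_nonneg_right _ (norm_nonneg _)
            rw [← hnsmul]; exact this
        _ = ‖(↑u⁻¹ : X →L[ℝ] X)‖ * (c⁻¹ * (‖A‖ * ‖B‖)) := by ring
    have h5 : ‖(↑u⁻¹ : X →L[ℝ] X)‖ * (c⁻¹ * (‖A‖ * ‖B‖))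
        ≤ (1 - η / c)⁻¹ * c⁻¹ := by
      have hinv2 : ‖(↑u⁻¹ : X →L[ℝ] X)‖ ≤ (1 - η / c)⁻¹ := by
        refine hinv.trans (inv_anti₀ (by linarith) (by linarith))
      have hpos : (0:ℝ) ≤ (1 - η / c)⁻¹ := inv_nonneg.mpr (by linarith)
      calc ‖(↑u⁻¹ : X →L[ℝ] X)‖ * (c⁻¹ * (‖A‖ * ‖B‖))
          ≤ (1 - η / c)⁻¹ * (c⁻¹ * (‖A‖ * ‖B‖)) := by
            apply mul_le_mul_of_nonneg_right hinv2 (by positivity)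
        _ ≤ (1 - η / c)⁻¹ * (c⁻¹ * 1) := by
            apply mul_le_mul_of_nonneg_left _ hpos
            exact mul_le_mul_of_nonneg_left hAB (by positivity)
        _ = (1 - η / c)⁻¹ * c⁻¹ := by ring
    have h6 : (1 - η / c)⁻¹ * c⁻¹ ≤ 2 / (1 - 2 * η) := by
      have hcη : (0:ℝ) < c - η := by linarith [lt_of_lt_of_le hη hc]
      have e1 : (1 - η / c)⁻¹ * c⁻¹ = (c - η)⁻¹ := by
        rw [← mul_inv]; congr 1; field_simp
      rw [e1, div_eq_mul_inv]
      rw [inv_le_iff_one_le_mul₀ hcη]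
      have h12 : (0:ℝ) < 1 - 2 * η := by linarith
      have h13 := mul_inv_cancel₀ h12.ne'
      nlinarith [inv_pos.mpr h12]
    linarith
end

section
/- Expansion of level sets of a faithful Haar system: let (b_J)_{J∈𝒟_{≤n}} be a finite faithful Haar system, and for J ∈ 𝒟_n set Γ_{J^±} = [b_J = ±1], and Γ_{[0,1)} understood via the recursion so that for I ∈ 𝒟_{n+1}, Γ_I is the corresponding level set. Then for every I ∈ 𝒟_{n+1}, χ_{Γ_I} = |I| χ_{[0,1)} + Σ_{J∈𝒟_{≤n}, J⊇I} (|I|/|J|) h_J(I) b_J, where h_J(I) denotes the constant value of the Haar function h_J on I. -/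
open MeasureTheory

/-- The Haar function `h_I = χ_{I⁺} - χ_{I⁻}` for `I = [i / 2 ^ n, (i + 1) / 2 ^ n)`. -/
noncomputable def haarF (n i : ℕ) : ℝ → ℝ := fun t =>
  (Set.Ico ((2 * i : ℝ) / 2 ^ (n + 1)) ((2 * i + 1 : ℝ) / 2 ^ (n + 1))).indicator
      (fun _ => (1 : ℝ)) t -
    (Set.Ico ((2 * i + 1 : ℝ) / 2 ^ (n + 1)) ((2 * i + 2 : ℝ) / 2 ^ (n + 1))).indicator
      (fun _ => (1 : ℝ)) t

/-- The iterated level sets `Γ_I` of a system `(b_J)`: `Γ_{[0,1)} = [0,1)` and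
`Γ_{I^±} = Γ_I ∩ [b_I = ±1]` (the index `i` at level `j + 1` has parent `i / 2`,
and `i` even means left half, sign `+1`). -/
def levelSet (b : ℕ → ℕ → ℝ → ℝ) : ℕ → ℕ → Set ℝ
  | 0, _ => Set.Ico (0 : ℝ) 1
  | j + 1, i =>
      levelSet b j (i / 2) ∩ {t | b j (i / 2) t = if i % 2 = 0 then 1 else -1}

/-! By faithfulness and induction, `Γ_J` is the support `⋃ 𝓑_J` of `b_J`, on which `b_J`
is `±1`. Hence `Γ_{J^±} = Γ_J ∩ [b_J = ±1]` has indicator `χ_{Γ_J} / 2 ± b_J / 2`, and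
unrolling this halving recursion from `Γ_{[0,1)} = [0,1)` down to level `n + 1` gives the
expansion. -/

open Set

lemma dyadicI_eq_Ico_two_mul (n i : ℕ) :
    dyadicI n i = Ico ((2 * i : ℝ) / 2 ^ (n + 1)) ((2 * i + 2 : ℝ) / 2 ^ (n + 1)) := by
  have h2 : (2 : ℝ) ^ (n + 1) = 2 * 2 ^ n := by ring
  rw [dyadicI, h2, mul_div_mul_left _ _ two_ne_zero,
    show (2 * i + 2 : ℝ) = 2 * (i + 1) by ring, mul_div_mul_left _ _ two_ne_zero]

lemma haarF_eq_zero_of_notMem {n i : ℕ} {t : ℝ} (ht : t ∉ dyadicI n i) : haarF n i t = 0 := by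
  rw [dyadicI_eq_Ico_two_mul] at ht
  have hmid : (2 * i : ℝ) / 2 ^ (n + 1) ≤ (2 * i + 1 : ℝ) / 2 ^ (n + 1) := by gcongr; linarith
  have hmid' : (2 * i + 1 : ℝ) / 2 ^ (n + 1) ≤ (2 * i + 2 : ℝ) / 2 ^ (n + 1) := by
    gcongr; linarith
  rw [haarF, indicator_of_notMem fun h => ht (Ico_subset_Ico le_rfl hmid' h),
    indicator_of_notMem fun h => ht (Ico_subset_Ico hmid le_rfl h), sub_zero]

lemma haarF_eq_one_or_neg_one {n i : ℕ} {t : ℝ} (ht : t ∈ dyadicI n i) :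
    haarF n i t = 1 ∨ haarF n i t = -1 := by
  rw [dyadicI_eq_Ico_two_mul, mem_Ico] at ht
  rcases lt_or_ge t ((2 * i + 1 : ℝ) / 2 ^ (n + 1)) with hleft | hright
  · left
    rw [haarF, indicator_of_mem (mem_Ico.mpr ⟨ht.1, hleft⟩),
      indicator_of_notMem fun h => h.1.not_gt hleft, sub_zero]
  · right
    rw [haarF, indicator_of_notMem fun h => h.2.not_ge hright,
      indicator_of_mem (mem_Ico.mpr ⟨hright, ht.2⟩), zero_sub]

lemma sum_mul_haarF_eq_zero_of_notMem {s : Finset (ℕ × ℕ)} (θ : ℕ × ℕ → ℝ) {t : ℝ}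
    (ht : t ∉ ⋃ p ∈ s, dyadicI p.1 p.2) : ∑ p ∈ s, θ p * haarF p.1 p.2 t = 0 :=
  Finset.sum_eq_zero fun p hp => by
    rw [haarF_eq_zero_of_notMem fun h => ht (mem_biUnion hp h), mul_zero]

lemma sum_mul_haarF_eq_one_or_neg_one {s : Finset (ℕ × ℕ)} {θ : ℕ × ℕ → ℝ} {t : ℝ}
    (hθ : ∀ p ∈ s, θ p = 1 ∨ θ p = -1)
    (hs : (s : Set (ℕ × ℕ)).PairwiseDisjoint fun p => dyadicI p.1 p.2)
    (ht : t ∈ ⋃ p ∈ s, dyadicI p.1 p.2) :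
    ∑ p ∈ s, θ p * haarF p.1 p.2 t = 1 ∨ ∑ p ∈ s, θ p * haarF p.1 p.2 t = -1 := by
  obtain ⟨p, hp, htp⟩ := mem_iUnion₂.mp ht
  have hothers : ∀ q ∈ s, q ≠ p → θ q * haarF q.1 q.2 t = 0 := fun q hq hqp => by
    rw [haarF_eq_zero_of_notMem fun htq => disjoint_left.mp (hs hq hp hqp) htq htp, mul_zero]
  rw [Finset.sum_eq_single_of_mem p hp hothers]
  rcases hθ p hp with h | h <;> rcases haarF_eq_one_or_neg_one htp with h' | h' <;> simp [h, h']

/-- The sign `h_J(I)` of the dyadic interval with index `k` inside its parent `J`. -/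
def childSign (k : ℕ) : ℝ := if k % 2 = 0 then 1 else -1

lemma childSign_eq_one_or_neg_one (k : ℕ) : childSign k = 1 ∨ childSign k = -1 := by
  unfold childSign; split_ifs <;> simp

lemma indicator_inter_setOf_eq {α : Type*} {S : Set α} {f : α → ℝ} {e : ℝ}
    (he : e = 1 ∨ e = -1) (hoff : ∀ t ∉ S, f t = 0)
    (hon : ∀ t ∈ S, f t = 1 ∨ f t = -1) (t : α) :
    (S ∩ {t | f t = e}).indicator (fun _ => (1 : ℝ)) t =
      S.indicator (fun _ => 1) t / 2 + e / 2 * f t := by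
  by_cases htS : t ∈ S
  · rcases he with rfl | rfl <;> rcases hon t htS with h | h <;>
      simp [htS, h] <;> norm_num [h]
  · simp [htS, hoff t htS]

lemma levelSet_eq_of_faithful {b : ℕ → ℕ → ℝ → ℝ} {U : ℕ → ℕ → Set ℝ} {n : ℕ}
    (hroot : U 0 0 = Ico 0 1) (hoff : ∀ j < n, ∀ i < 2 ^ j, ∀ t ∉ U j i, b j i t = 0)
    (hfaithful : ∀ j < n, ∀ i < 2 ^ j,
      U (j + 1) (2 * i) = {t | b j i t = 1} ∧ U (j + 1) (2 * i + 1) = {t | b j i t = -1}) :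
    ∀ j ≤ n, ∀ i < 2 ^ j, levelSet b j i = U j i := by
  intro j
  induction j with
  | zero =>
    intro _ i hi
    rw [Nat.lt_one_iff.mp hi, hroot]
    rfl
  | succ j ih =>
    intro hj i hi
    have hi2 : i / 2 < 2 ^ j := Nat.div_lt_of_lt_mul (by rwa [← pow_succ'])
    have hsupp : ∀ e : ℝ, e ≠ 0 → {t | b j (i / 2) t = e} ⊆ U j (i / 2) :=
      fun e he t ht => by
        by_contra hU
        exact he (ht.symm.trans (hoff j hj (i / 2) hi2 t hU))
    obtain ⟨hleft, hright⟩ := hfaithful j hj (i / 2) hi2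
    rw [levelSet, ih (Nat.le_of_succ_le hj) (i / 2) hi2]
    rcases Nat.mod_two_eq_zero_or_one i with h | h
    · rw [if_pos h, inter_eq_right.mpr (hsupp 1 one_ne_zero), ← hleft]
      congr 1; omega
    · rw [if_neg (by omega), inter_eq_right.mpr (hsupp (-1) (by norm_num)), ← hright]
      congr 1; omega

lemma eq_add_sum_of_halving_recursion {g c : ℕ → ℕ → ℝ} {a : ℝ} {n : ℕ}
    (h0 : ∀ i, g 0 i = a)
    (hstep : ∀ m ≤ n, ∀ i < 2 ^ (m + 1),
      g (m + 1) i = g m (i / 2) / 2 + childSign i / 2 * c m (i / 2)) :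
    ∀ m ≤ n, ∀ i < 2 ^ (m + 1), g (m + 1) i =
      1 / 2 ^ (m + 1) * a + ∑ j ∈ Finset.range (m + 1),
        2 ^ j / 2 ^ (m + 1) * childSign (i / 2 ^ (m - j)) * c j (i / 2 ^ (m + 1 - j)) := by
  intro m
  induction m with
  | zero =>
    intro h i hi
    simp only [hstep 0 h i hi, h0, zero_add, pow_one, pow_zero, Nat.div_one, Finset.range_one,
      Finset.sum_singleton, zero_tsub, tsub_zero]
    ring
  | succ m ih =>
    intro hm i hi
    have hi2 : i / 2 < 2 ^ (m + 1) := Nat.div_lt_of_lt_mul (by rwa [← pow_succ'])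
    have hdiv : ∀ k, i / 2 / 2 ^ k = i / 2 ^ (k + 1) := fun k => by
      rw [Nat.div_div_eq_div_mul, pow_succ']
    have hsum : ∀ j ∈ Finset.range (m + 1),
        2 ^ j / 2 ^ (m + 1) * childSign (i / 2 / 2 ^ (m - j)) * c j (i / 2 / 2 ^ (m + 1 - j)) / 2
          = 2 ^ j / 2 ^ (m + 2) * childSign (i / 2 ^ (m + 1 - j)) * c j (i / 2 ^ (m + 2 - j)) :=
      fun j hj => by
        have hjm := Finset.mem_range.mp hj
        rw [hdiv, hdiv, show m - j + 1 = m + 1 - j by omega,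
          show m + 1 - j + 1 = m + 2 - j by omega, pow_succ _ (m + 1)]
        ring
    rw [hstep (m + 1) hm i hi, ih (by omega) (i / 2) hi2, add_div, Finset.sum_div,
      Finset.sum_congr rfl hsum, Finset.sum_range_succ _ (m + 1), Nat.sub_self,
      Nat.add_sub_cancel_left, pow_zero, Nat.div_one, pow_one]
    field_simp
    ring

theorem faithful_levelSet_expansion_general
    (n : ℕ) (𝓑 : ℕ → ℕ → Finset (ℕ × ℕ)) (θ : ℕ × ℕ → ℝ)
    (b : ℕ → ℕ → ℝ → ℝ)
    (hθ : ∀ p, θ p = 1 ∨ θ p = -1)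
    (hdisjoint_within : ∀ j ≤ n, ∀ i < 2 ^ j, ∀ p ∈ 𝓑 j i, ∀ q ∈ 𝓑 j i, p ≠ q →
      Disjoint (dyadicI p.1 p.2) (dyadicI q.1 q.2))
    (hdef : ∀ j ≤ n, ∀ i < 2 ^ j,
      b j i = fun t => ∑ p ∈ 𝓑 j i, θ p * haarF p.1 p.2 t)
    (hroot : (⋃ p ∈ 𝓑 0 0, dyadicI p.1 p.2) = Set.Ico (0 : ℝ) 1)
    (hfaithful : ∀ j < n, ∀ i < 2 ^ j,
      ((⋃ p ∈ 𝓑 (j + 1) (2 * i), dyadicI p.1 p.2) = {t | b j i t = 1}) ∧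
      ((⋃ p ∈ 𝓑 (j + 1) (2 * i + 1), dyadicI p.1 p.2) = {t | b j i t = -1})) :
    ∀ i < 2 ^ (n + 1), ∀ t : ℝ,
      (levelSet b (n + 1) i).indicator (fun _ => (1 : ℝ)) t =
        ((1 : ℝ) / 2 ^ (n + 1)) * (Set.Ico (0 : ℝ) 1).indicator (fun _ => (1 : ℝ)) t +
        ∑ j ∈ Finset.range (n + 1),
          ((2 : ℝ) ^ j / 2 ^ (n + 1)) *
            (if (i / 2 ^ (n - j)) % 2 = 0 then (1 : ℝ) else -1) *
            b j (i / 2 ^ (n + 1 - j)) t := by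
  set U : ℕ → ℕ → Set ℝ := fun j i => ⋃ p ∈ 𝓑 j i, dyadicI p.1 p.2
  have hoff : ∀ j ≤ n, ∀ i < 2 ^ j, ∀ t ∉ U j i, b j i t = 0 := fun j hj i hi t ht => by
    rw [hdef j hj i hi]
    exact sum_mul_haarF_eq_zero_of_notMem θ ht
  have hon : ∀ j ≤ n, ∀ i < 2 ^ j, ∀ t ∈ U j i, b j i t = 1 ∨ b j i t = -1 :=
    fun j hj i hi t ht => by
      rw [hdef j hj i hi]
      exact sum_mul_haarF_eq_one_or_neg_one (fun p _ => hθ p) (hdisjoint_within j hj i hi) ht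
  have hΓ := levelSet_eq_of_faithful hroot (fun j hj => hoff j hj.le) hfaithful
  intro i hi t
  refine eq_add_sum_of_halving_recursion
    (g := fun m i => (levelSet b m i).indicator (fun _ => 1) t) (c := fun j i => b j i t)
    (fun _ => rfl) ?_ n le_rfl i hi
  intro m hm i hi
  have hi2 : i / 2 < 2 ^ m := Nat.div_lt_of_lt_mul (by rwa [← pow_succ'])
  have hoffΓ := hoff m hm _ hi2
  have honΓ := hon m hm _ hi2
  rw [← hΓ m hm _ hi2] at hoffΓ honΓ
  exact indicator_inter_setOf_eq (childSign_eq_one_or_neg_one i) hoffΓ honΓ t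

/-- Expansion of the level sets of a finite faithful Haar system `(b_J)_{J ∈ 𝒟_{≤ n}}`:
for every `I ∈ 𝒟_{n+1}`,
`χ_{Γ_I} = |I| χ_{[0,1)} + Σ_{J ∈ 𝒟_{≤ n}, J ⊇ I} (|I|/|J|) h_J(I) b_J`,
where `h_J(I)` is the constant value of `h_J` on `I`.  Here the ancestor of `I` (index
`i < 2 ^ (n+1)`) at level `j` has index `i / 2 ^ (n + 1 - j)`, `|I|/|J| = 2^j / 2^(n+1)`,
and `h_J(I) = 1` iff `i / 2 ^ (n - j)` is even. -/
theorem faithful_levelSet_expansion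
    (n : ℕ) (𝓑 : ℕ → ℕ → Finset (ℕ × ℕ)) (θ : ℕ × ℕ → ℝ)
    (b : ℕ → ℕ → ℝ → ℝ)
    (hθ : ∀ p, θ p = 1 ∨ θ p = -1)
    (hvalid : ∀ j ≤ n, ∀ i < 2 ^ j, ∀ p ∈ 𝓑 j i, p.2 < 2 ^ p.1)
    (hdisjoint_within : ∀ j ≤ n, ∀ i < 2 ^ j, ∀ p ∈ 𝓑 j i, ∀ q ∈ 𝓑 j i, p ≠ q →
      Disjoint (dyadicI p.1 p.2) (dyadicI q.1 q.2))
    (hdisjoint_between : ∀ j ≤ n, ∀ i < 2 ^ j, ∀ j' ≤ n, ∀ i' < 2 ^ j',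
      (j, i) ≠ (j', i') → 𝓑 j i ∩ 𝓑 j' i' = ∅)
    (hdef : ∀ j ≤ n, ∀ i < 2 ^ j,
      b j i = fun t => ∑ p ∈ 𝓑 j i, θ p * haarF p.1 p.2 t)
    (hroot : (⋃ p ∈ 𝓑 0 0, dyadicI p.1 p.2) = Set.Ico (0 : ℝ) 1)
    (hfaithful : ∀ j < n, ∀ i < 2 ^ j,
      ((⋃ p ∈ 𝓑 (j + 1) (2 * i), dyadicI p.1 p.2) = {t | b j i t = 1}) ∧
      ((⋃ p ∈ 𝓑 (j + 1) (2 * i + 1), dyadicI p.1 p.2) = {t | b j i t = -1})) :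
    ∀ i < 2 ^ (n + 1), ∀ t : ℝ,
      (levelSet b (n + 1) i).indicator (fun _ => (1 : ℝ)) t =
        ((1 : ℝ) / 2 ^ (n + 1)) * (Set.Ico (0 : ℝ) 1).indicator (fun _ => (1 : ℝ)) t +
        ∑ j ∈ Finset.range (n + 1),
          ((2 : ℝ) ^ j / 2 ^ (n + 1)) *
            (if (i / 2 ^ (n - j)) % 2 = 0 then (1 : ℝ) else -1) *
            b j (i / 2 ^ (n + 1 - j)) t :=
  faithful_levelSet_expansion_general n 𝓑 θ b hθ hdisjoint_within hdef hroot hfaithful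
end

section
/- Dichotomy from near-scalar factorization: let X be a Banach space and T : X→X a bounded operator. Suppose for every η > 0 there exist a scalar c_η ∈ ℝ and operators A_η, B_η with ‖A_η‖·‖B_η‖ ≤ 1, A_η B_η = I_X, and ‖A_η T B_η − c_η I_X‖ ≤ η. Then for every ε > 0, the identity I_X factors either through T or through I_X − T with constant 2 + ε. -/
set_option synthInstance.maxHeartbeats 1000000
set_option maxHeartbeats 1000000

open ContinuousLinearMap in
lemma left_inv_of_near_scalar
    {X : Type*} [NormedAddCommGroup X] [NormedSpace ℝ X] [CompleteSpace X]
    (S : X →L[ℝ] X) (d η : ℝ) (hd : 1/2 ≤ |d|) (hη : 0 < η) (hη2 : η < 1/2)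
    (hS : ‖S - d • (1 : X →L[ℝ] X)‖ ≤ η) :
    ∃ V : X →L[ℝ] X, V * S = 1 ∧ ‖V‖ ≤ (1/2 - η)⁻¹ := by
  have hd0 : d ≠ 0 := by intro h; rw [h] at hd; simp at hd; linarith
  set t : X →L[ℝ] X := 1 - d⁻¹ • S with ht
  have hdt : |d| * ‖t‖ ≤ η := by
    have : t = d⁻¹ • (d • (1 : X →L[ℝ] X) - S) := by
      rw [smul_sub, smul_smul, inv_mul_cancel₀ hd0, one_smul, ht]
    rw [this]; rw [norm_smul d⁻¹ (d • (1 : X →L[ℝ] X) - S), norm_inv, Real.norm_eq_abs, ← mul_assoc,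
      mul_inv_cancel₀ (abs_ne_zero.mpr hd0), one_mul]
    rwa [norm_sub_rev] at hS
  have htlt : ‖t‖ < 1 := by
    nlinarith [norm_nonneg t, abs_nonneg d]
  refine ⟨d⁻¹ • ∑' n : ℕ, t ^ n, ?_, ?_⟩
  · have hSt : S = d • ((1 : X →L[ℝ] X) - t) := by
      rw [ht]; simp [smul_sub, smul_smul, mul_inv_cancel₀ hd0]
    rw [hSt, smul_mul_smul_comm d⁻¹ _ d _, inv_mul_cancel₀ hd0, geom_series_mul_neg t htlt, one_smul]
  · rw [norm_smul d⁻¹ (∑' n : ℕ, t ^ n), norm_inv, Real.norm_eq_abs]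
    have h1 : ‖∑' n : ℕ, t ^ n‖ ≤ ‖(1 : X →L[ℝ] X)‖ - 1 + (1 - ‖t‖)⁻¹ :=
      tsum_geometric_le_of_norm_lt_one t htlt
    have h2 : ‖(1 : X →L[ℝ] X)‖ ≤ 1 := ContinuousLinearMap.norm_id_le
    have h3 : ‖∑' n : ℕ, t ^ n‖ ≤ (1 - ‖t‖)⁻¹ := by linarith
    have hpos : (0:ℝ) < 1 - ‖t‖ := by linarith
    have hdpos : (0:ℝ) < |d| := by positivity
    have hpos2 : (0:ℝ) < 1/2 - η := by linarith
    have key : (1/2 - η) ≤ |d| * (1 - ‖t‖) := by nlinarith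
    calc |d|⁻¹ * ‖∑' n : ℕ, t ^ n‖
        ≤ |d|⁻¹ * (1 - ‖t‖)⁻¹ := by
          apply mul_le_mul_of_nonneg_left h3 (by positivity)
      _ = (|d| * (1 - ‖t‖))⁻¹ := (mul_inv _ _).symm
      _ ≤ (1/2 - η)⁻¹ := by
          rw [inv_le_inv₀ (by positivity) hpos2]
          exact key



/-- Dichotomy from near-scalar factorization: if for every `η > 0` there are a scalar
`c_η` and operators `A_η, B_η` with `‖A_η‖ ‖B_η‖ ≤ 1`, `A_η B_η = I`, and
`‖A_η T B_η - c_η I‖ ≤ η`, then for every `ε > 0` the identity factors either through `T`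
or through `I - T` with constant `2 + ε`. -/
theorem factorization_dichotomy
    {X : Type*} [NormedAddCommGroup X] [NormedSpace ℝ X] [CompleteSpace X]
    (T : X →L[ℝ] X)
    (h : ∀ η : ℝ, 0 < η → ∃ (c : ℝ) (A B : X →L[ℝ] X),
      ‖A‖ * ‖B‖ ≤ 1 ∧ A.comp B = ContinuousLinearMap.id ℝ X ∧
      ‖A.comp (T.comp B) - c • ContinuousLinearMap.id ℝ X‖ ≤ η) :
    ∀ ε : ℝ, 0 < ε →
      (∃ L R : X →L[ℝ] X,
        L.comp (T.comp R) = ContinuousLinearMap.id ℝ X ∧ ‖L‖ * ‖R‖ ≤ 2 + ε) ∨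
      (∃ L R : X →L[ℝ] X,
        L.comp ((ContinuousLinearMap.id ℝ X - T).comp R) = ContinuousLinearMap.id ℝ X ∧
        ‖L‖ * ‖R‖ ≤ 2 + ε) := by
  intro ε hε
  set η : ℝ := ε / (4 * (2 + ε)) with hηdef
  have hη : 0 < η := by positivity
  have hη2 : η < 1/2 := by
    rw [hηdef, div_lt_iff₀ (by positivity)]
    nlinarith
  obtain ⟨c, A, B, hAB, hABid, hnear⟩ := h η hη
  have h1d : (ContinuousLinearMap.id ℝ X : X →L[ℝ] X) = 1 := rfl
  have hABid' : A * B = 1 := hABid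
  have hnear' : ‖A * (T * B) - c • (1 : X →L[ℝ] X)‖ ≤ η := hnear
  have hbound : (1/2 - η)⁻¹ ≤ 2 + ε := by
    have hpos2 : (0:ℝ) < 1/2 - η := by linarith
    rw [inv_le_iff_one_le_mul₀ hpos2]
    have heq : (2 + ε) * (1/2 - η) = 1 + ε/4 := by
      rw [hηdef]; field_simp; ring
    nlinarith
  by_cases hc : 1/2 ≤ |c|
  · obtain ⟨V, hV, hVn⟩ := left_inv_of_near_scalar (A * (T * B)) c η hc hη hη2 hnear'
    left
    refine ⟨V * A, B, ?_, ?_⟩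
    · show (V * A) * (T * B) = 1
      rw [mul_assoc, hV]
    · calc ‖V * A‖ * ‖B‖ ≤ (‖V‖ * ‖A‖) * ‖B‖ := by
            apply mul_le_mul_of_nonneg_right (norm_mul_le V A) (norm_nonneg B)
        _ = ‖V‖ * (‖A‖ * ‖B‖) := by ring
        _ ≤ (1/2 - η)⁻¹ * 1 := by
            have hpos2 : (0:ℝ) < 1/2 - η := by linarith
            apply mul_le_mul hVn hAB (by positivity) (by positivity)
        _ ≤ 2 + ε := by rw [mul_one]; exact hbound
  · have hc' : 1/2 ≤ |1 - c| := by
      have := abs_sub_abs_le_abs_sub (1:ℝ) c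
      rw [abs_one] at this
      push_neg at hc
      linarith
    have hS' : ‖(1 - A * (T * B)) - (1 - c) • (1 : X →L[ℝ] X)‖ ≤ η := by
      have : (1 - A * (T * B)) - (1 - c) • (1 : X →L[ℝ] X)
          = -(A * (T * B) - c • (1 : X →L[ℝ] X)) := by
        rw [sub_smul, one_smul]; abel
      rw [this, norm_neg]; exact hnear'
    obtain ⟨V, hV, hVn⟩ := left_inv_of_near_scalar (1 - A * (T * B)) (1 - c) η hc' hη hη2 hS'
    right
    refine ⟨V * A, B, ?_, ?_⟩
    · show (V * A) * ((1 - T) * B) = 1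
      rw [mul_assoc, sub_mul, one_mul, mul_sub, hABid', hV]
    · calc ‖V * A‖ * ‖B‖ ≤ (‖V‖ * ‖A‖) * ‖B‖ := by
            apply mul_le_mul_of_nonneg_right (norm_mul_le V A) (norm_nonneg B)
        _ = ‖V‖ * (‖A‖ * ‖B‖) := by ring
        _ ≤ (1/2 - η)⁻¹ * 1 := by
            have hpos2 : (0:ℝ) < 1/2 - η := by linarith
            apply mul_le_mul hVn hAB (by positivity) (by positivity)
        _ ≤ 2 + ε := by rw [mul_one]; exact hbound
end
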